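/- Let σ_𝓛, σ_𝓡 ≤ −1/(2pΔx) and σ_𝓓, σ_𝓤 ≤ −1/(2pΔy) be real numbers. Then for all grid functions V¹, V², φ ∈ ℝ^{NM}: (pΔx/2)·φᵀ(I_N⊗P_y)(𝓛+𝓡)φ + (pΔy/2)·φᵀ(P_x⊗I_M)(𝓓+𝓤)φ + (V¹)ᵀ(𝓤−𝓓)(P_x⊗I_M)φ − (V²)ᵀ(𝓡−𝓛)(I_N⊗P_y)φ − σ_𝓛·(V²)ᵀ(I_N⊗P_y)𝓛V² − σ_𝓡·(V²)ᵀ(I_N⊗P_y)𝓡V² − σ_𝓓·(V¹)ᵀ(P_x⊗I_M)𝓓V¹ − σ_𝓤·(V¹)ᵀ(P_x⊗I_M)𝓤V¹ ≥ 0. -/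
import Mathlib

open Matrix Kronecker

lemma key (k a b c : ℝ) (hk : 0 < k) (hc : c ≤ -1/(2*k)) :
    0 ≤ k/2*a^2 + a*b - c*b^2 := by
  have hk' : 0 < 2*k := by linarith
  rw [le_div_iff₀ hk'] at hc
  nlinarith [sq_nonneg (k*a+b), sq_nonneg b, mul_le_mul_of_nonneg_right hc (sq_nonneg b)]

/-- Nonnegativity of the boundary quadratic form `A` appearing in the
stability proof of the SBP-SAT scheme with Dirichlet penalties. -/
theorem stmt11 (N M : ℕ) (hN : 2 ≤ N) (hM : 2 ≤ M)
    (dx dy p : ℝ) (hdx : 0 < dx) (hdy : 0 < dy)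
    (px : Fin N → ℝ) (hpx : ∀ i, 0 < px i)
    (py : Fin M → ℝ) (hpy : ∀ j, 0 < py j)
    (hp0x : px ⟨0, by omega⟩ = p) (hpNx : px ⟨N - 1, by omega⟩ = p)
    (hp0y : py ⟨0, by omega⟩ = p) (hpMy : py ⟨M - 1, by omega⟩ = p)
    (σL σR σD σU : ℝ)
    (hσL : σL ≤ -1 / (2 * p * dx)) (hσR : σR ≤ -1 / (2 * p * dx))
    (hσD : σD ≤ -1 / (2 * p * dy)) (hσU : σU ≤ -1 / (2 * p * dy))
    (V1 V2 φ : Fin N × Fin M → ℝ) :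
    let Px : Matrix (Fin N) (Fin N) ℝ := Matrix.diagonal (fun i => dx * px i)
    let Py : Matrix (Fin M) (Fin M) ℝ := Matrix.diagonal (fun j => dy * py j)
    let IN : Matrix (Fin N) (Fin N) ℝ := 1
    let IM : Matrix (Fin M) (Fin M) ℝ := 1
    let RN : Matrix (Fin N) (Fin N) ℝ :=
      Matrix.diagonal (fun i => if (i : ℕ) = N - 1 then 1 else 0)
    let LN : Matrix (Fin N) (Fin N) ℝ :=
      Matrix.diagonal (fun i => if (i : ℕ) = 0 then 1 else 0)
    let RM : Matrix (Fin M) (Fin M) ℝ :=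
      Matrix.diagonal (fun j => if (j : ℕ) = M - 1 then 1 else 0)
    let LM : Matrix (Fin M) (Fin M) ℝ :=
      Matrix.diagonal (fun j => if (j : ℕ) = 0 then 1 else 0)
    let cR := RN ⊗ₖ IM
    let cL := LN ⊗ₖ IM
    let cU := IN ⊗ₖ RM
    let cD := IN ⊗ₖ LM
    (p * dx / 2) * (φ ⬝ᵥ ((IN ⊗ₖ Py) * (cL + cR)).mulVec φ)
      + (p * dy / 2) * (φ ⬝ᵥ ((Px ⊗ₖ IM) * (cD + cU)).mulVec φ)
      + V1 ⬝ᵥ ((cU - cD) * (Px ⊗ₖ IM)).mulVec φ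
      - V2 ⬝ᵥ ((cR - cL) * (IN ⊗ₖ Py)).mulVec φ
      - σL * (V2 ⬝ᵥ ((IN ⊗ₖ Py) * cL).mulVec V2)
      - σR * (V2 ⬝ᵥ ((IN ⊗ₖ Py) * cR).mulVec V2)
      - σD * (V1 ⬝ᵥ ((Px ⊗ₖ IM) * cD).mulVec V1)
      - σU * (V1 ⬝ᵥ ((Px ⊗ₖ IM) * cU).mulVec V1)
      ≥ 0 := by
  intro Px Py IN IM RN LN RM LM cR cL cU cD
  simp only [Px, Py, IN, IM, RN, LN, RM, LM, cR, cL, cU, cD,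
    ← Matrix.diagonal_one, Matrix.diagonal_kronecker_diagonal,
    mul_add, sub_mul,
    Matrix.diagonal_mul_diagonal, dotProduct,
    Matrix.add_mulVec, Matrix.sub_mulVec, Pi.add_apply, Pi.sub_apply,
    Matrix.mulVec_diagonal]
  have hp : 0 < p := hp0x ▸ hpx _
  have hkx : 0 < p * dx := mul_pos hp hdx
  have hky : 0 < p * dy := mul_pos hp hdy
  have hσL' : σL ≤ -1 / (2 * (p * dx)) := by rwa [← mul_assoc]
  have hσR' : σR ≤ -1 / (2 * (p * dx)) := by rwa [← mul_assoc]
  have hσD' : σD ≤ -1 / (2 * (p * dy)) := by rwa [← mul_assoc]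
  have hσU' : σU ≤ -1 / (2 * (p * dy)) := by rwa [← mul_assoc]
  rw [Finset.mul_sum, Finset.mul_sum, Finset.mul_sum, Finset.mul_sum, Finset.mul_sum,
    Finset.mul_sum, ← Finset.sum_add_distrib, ← Finset.sum_add_distrib,
    ← Finset.sum_sub_distrib, ← Finset.sum_sub_distrib, ← Finset.sum_sub_distrib,
    ← Finset.sum_sub_distrib, ← Finset.sum_sub_distrib]
  refine le_of_eq_of_le rfl (Finset.sum_nonneg fun x _ => ?_)
  have e : p * dx / 2 *
          (φ x * (1 * (dy * py x.2) * ((if (↑x.1 : ℕ) = 0 then (1:ℝ) else 0) * 1) * φ x) +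
            φ x * (1 * (dy * py x.2) * ((if (↑x.1 : ℕ) = N - 1 then (1:ℝ) else 0) * 1) * φ x)) +
        p * dy / 2 *
          (φ x * (dx * px x.1 * 1 * (1 * if (↑x.2 : ℕ) = 0 then (1:ℝ) else 0) * φ x) +
            φ x * (dx * px x.1 * 1 * (1 * if (↑x.2 : ℕ) = M - 1 then (1:ℝ) else 0) * φ x)) +
        V1 x *
          ((1 * if (↑x.2 : ℕ) = M - 1 then (1:ℝ) else 0) * (dx * px x.1 * 1) * φ x -
            (1 * if (↑x.2 : ℕ) = 0 then (1:ℝ) else 0) * (dx * px x.1 * 1) * φ x) -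
        V2 x *
          ((if (↑x.1 : ℕ) = N - 1 then (1:ℝ) else 0) * 1 * (1 * (dy * py x.2)) * φ x -
            (if (↑x.1 : ℕ) = 0 then (1:ℝ) else 0) * 1 * (1 * (dy * py x.2)) * φ x) -
        σL * (V2 x * (1 * (dy * py x.2) * ((if (↑x.1 : ℕ) = 0 then (1:ℝ) else 0) * 1) * V2 x)) -
        σR * (V2 x * (1 * (dy * py x.2) * ((if (↑x.1 : ℕ) = N - 1 then (1:ℝ) else 0) * 1) * V2 x)) -
        σD * (V1 x * (dx * px x.1 * 1 * (1 * if (↑x.2 : ℕ) = 0 then (1:ℝ) else 0) * V1 x)) -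
        σU * (V1 x * (dx * px x.1 * 1 * (1 * if (↑x.2 : ℕ) = M - 1 then (1:ℝ) else 0) * V1 x))
      = dy * py x.2 * (if (↑x.1 : ℕ) = 0 then (1:ℝ) else 0) *
          (p * dx / 2 * (φ x) ^ 2 + φ x * V2 x - σL * (V2 x) ^ 2)
        + dy * py x.2 * (if (↑x.1 : ℕ) = N - 1 then (1:ℝ) else 0) *
          (p * dx / 2 * (φ x) ^ 2 + φ x * (-V2 x) - σR * (-V2 x) ^ 2)
        + dx * px x.1 * (if (↑x.2 : ℕ) = 0 then (1:ℝ) else 0) *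
          (p * dy / 2 * (φ x) ^ 2 + φ x * (-V1 x) - σD * (-V1 x) ^ 2)
        + dx * px x.1 * (if (↑x.2 : ℕ) = M - 1 then (1:ℝ) else 0) *
          (p * dy / 2 * (φ x) ^ 2 + φ x * V1 x - σU * (V1 x) ^ 2) := by ring
  rw [e]
  have hi0 : (0:ℝ) ≤ (if (↑x.1 : ℕ) = 0 then (1:ℝ) else 0) := by positivity
  have hi1 : (0:ℝ) ≤ (if (↑x.1 : ℕ) = N - 1 then (1:ℝ) else 0) := by positivity
  have hj0 : (0:ℝ) ≤ (if (↑x.2 : ℕ) = 0 then (1:ℝ) else 0) := by positivity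
  have hj1 : (0:ℝ) ≤ (if (↑x.2 : ℕ) = M - 1 then (1:ℝ) else 0) := by positivity
  have hdyp : (0:ℝ) ≤ dy * py x.2 := le_of_lt (mul_pos hdy (hpy _))
  have hdxp : (0:ℝ) ≤ dx * px x.1 := le_of_lt (mul_pos hdx (hpx _))
  have k1 := key (p * dx) (φ x) (V2 x) σL hkx hσL'
  have k2 := key (p * dx) (φ x) (-V2 x) σR hkx hσR'
  have k3 := key (p * dy) (φ x) (-V1 x) σD hky hσD'
  have k4 := key (p * dy) (φ x) (V1 x) σU hky hσU'
  have t1 := mul_nonneg (mul_nonneg hdyp hi0) k1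
  have t2 := mul_nonneg (mul_nonneg hdyp hi1) k2
  have t3 := mul_nonneg (mul_nonneg hdxp hj0) k3
  have t4 := mul_nonneg (mul_nonneg hdxp hj1) k4
  linarith
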